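/- For every real t with 0 ≤ t < 4, the series ∑_{p≥0} (p!)²/(2p)! · t^p converges and its sum equals (1/(1−t/4)) · (1 + (1/2)·√(t/(1−t/4))·arcsin(√t/2)). -/

import Mathlib

/-!
Since `∫₀¹ xᵖ (1 - x)ᵖ dx = (p!)² / (2p + 1)!`, the `p`-th term of the series is
`∫₀¹ (2p + 1) uᵖ dx` with `u = t x (1 - x) ∈ [0, t/4]`. Summing the series
`∑ (2p + 1) uᵖ = (1 + u) / (1 - u)²` under the integral (dominated by its value at `u = t/4`)
turns the sum into `∫₀¹ (1 + u) / (1 - u)² dx`. As `1 - u = b + t (x - 1/2)²` with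
`b = 1 - t/4`, this integral is elementary and its arctangent term is `arcsin (√t / 2)`.
-/

open intervalIntegral Real Nat

theorem integral_pow_mul_one_sub_pow_succ (m n : ℕ) :
    (m + 1 : ℝ) * ∫ x in (0 : ℝ)..1, x ^ m * (1 - x) ^ (n + 1)
      = (n + 1) * ∫ x in (0 : ℝ)..1, x ^ (m + 1) * (1 - x) ^ n := by
  have hparts := integral_mul_deriv_eq_deriv_mul (a := 0) (b := 1)
    (u := fun x : ℝ => (1 - x) ^ (n + 1)) (u' := fun x => -((n + 1 : ℝ) * (1 - x) ^ n))
    (v := fun x : ℝ => x ^ (m + 1)) (v' := fun x => (m + 1 : ℝ) * x ^ m)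
    (fun x _ => by simpa using ((hasDerivAt_id x).const_sub 1).fun_pow (n + 1))
    (fun x _ => by simpa using hasDerivAt_pow (m + 1) x)
    (Continuous.intervalIntegrable (by fun_prop) _ _)
    (Continuous.intervalIntegrable (by fun_prop) _ _)
  simp only [sub_self, zero_pow (succ_ne_zero _), zero_mul, mul_zero, sub_zero, neg_mul,
    integral_neg, sub_neg_eq_add, zero_add] at hparts
  rw [← integral_const_mul, ← integral_const_mul]
  convert hparts using 1 <;> congr 1 <;> ext x <;> ring

theorem integral_pow_mul_one_sub_pow (m n : ℕ) :
    ∫ x in (0 : ℝ)..1, x ^ m * (1 - x) ^ n = (m ! * n ! : ℝ) / (m + n + 1)! := by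
  induction n generalizing m with
  | zero => simp [integral_pow, factorial_succ]; field_simp
  | succ n ih =>
    have h := integral_pow_mul_one_sub_pow_succ m n
    rw [ih (m + 1), show m + 1 + n + 1 = m + (n + 1) + 1 by omega, factorial_succ m] at h
    rw [eq_div_iff (by positivity), factorial_succ n]
    field_simp at h
    push_cast at h ⊢
    apply mul_left_cancel₀ (show (m + 1 : ℝ) ≠ 0 by positivity)
    linear_combination h

theorem hasSum_two_mul_add_one_mul_geometric {𝕜 : Type*} [NormedField 𝕜] [CompleteSpace 𝕜]
    {u : 𝕜} (hu : ‖u‖ < 1) :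
    HasSum (fun n : ℕ => (2 * n + 1) * u ^ n) ((1 + u) / (1 - u) ^ 2) := by
  have hu1 : 1 - u ≠ 0 := sub_ne_zero.2 (by rintro rfl; simp at hu)
  have h := ((hasSum_coe_mul_geometric_of_norm_lt_one hu).mul_left 2).add
    (hasSum_geometric_of_norm_lt_one hu)
  rw [show (1 + u) / (1 - u) ^ 2 = 2 * (u / (1 - u) ^ 2) + (1 - u)⁻¹ by field_simp; ring]
  exact h.congr_fun fun n => by ring

theorem integral_two_mul_add_one_mul_pow_mul_one_sub (t : ℝ) (p : ℕ) :
    ∫ x in (0 : ℝ)..1, (2 * p + 1) * (t * x * (1 - x)) ^ p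
      = (p ! : ℝ) ^ 2 / (2 * p)! * t ^ p := by
  simp_rw [mul_pow, mul_assoc, integral_const_mul, integral_pow_mul_one_sub_pow,
    show p + p + 1 = 2 * p + 1 by ring, factorial_succ]
  push_cast
  field_simp

theorem mul_one_sub_mem_Icc {x : ℝ} (hx : x ∈ Set.Icc (0 : ℝ) 1) :
    x * (1 - x) ∈ Set.Icc (0 : ℝ) (1 / 4) :=
  ⟨mul_nonneg hx.1 (sub_nonneg.2 hx.2), by nlinarith [sq_nonneg (x - 1 / 2)]⟩

theorem hasSum_factorial_sq_div_factorial_mul_pow {t : ℝ} (ht0 : 0 ≤ t) (ht4 : t < 4) :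
    HasSum (fun p : ℕ => (p ! : ℝ) ^ 2 / (2 * p)! * t ^ p)
      (∫ x in (0 : ℝ)..1, (1 + t * x * (1 - x)) / (1 - t * x * (1 - x)) ^ 2) := by
  have hbound : ∀ x ∈ Set.uIoc (0 : ℝ) 1, ‖t * x * (1 - x)‖ ≤ t / 4 := by
    intro x hx
    have := mul_one_sub_mem_Icc (Set.Ioc_subset_Icc_self (Set.uIoc_of_le (zero_le_one' ℝ) ▸ hx))
    rw [norm_of_nonneg (by rw [mul_assoc]; exact mul_nonneg ht0 this.1), mul_assoc]
    nlinarith [this.2]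
  have hq : ‖t / 4‖ < 1 := by rw [norm_of_nonneg (by linarith)]; linarith
  simp_rw [← integral_two_mul_add_one_mul_pow_mul_one_sub]
  refine hasSum_integral_of_dominated_convergence (fun p _ => (2 * p + 1) * (t / 4) ^ p)
    (fun p => (Continuous.aestronglyMeasurable (by fun_prop)))
    (fun p => Filter.Eventually.of_forall fun x hx => ?_)
    (Filter.Eventually.of_forall fun x _ => (hasSum_two_mul_add_one_mul_geometric hq).summable)
    intervalIntegrable_const
    (Filter.Eventually.of_forall fun x hx =>
      hasSum_two_mul_add_one_mul_geometric ((hbound x hx).trans_lt (by linarith)))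
  rw [norm_mul, norm_pow]
  gcongr
  · exact (norm_of_nonneg (by positivity)).le
  · exact hbound x hx

section ClosedForm

variable {t : ℝ}

theorem one_sub_mul_mul_one_sub_pos (ht0 : 0 ≤ t) (ht4 : t < 4) (x : ℝ) :
    0 < 1 - t * x * (1 - x) := by
  nlinarith [mul_nonneg ht0 (sq_nonneg (x - 1 / 2))]

theorem hasDerivAt_primitive_one_add_div_one_sub_sq (ht0 : 0 ≤ t) (ht4 : t < 4) (x : ℝ) :
    HasDerivAt
      (fun x => √(t / (1 - t / 4)) / (4 * (1 - t / 4))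
          * arctan ((x - 1 / 2) * √(t / (1 - t / 4)))
        + (x - 1 / 2) / ((1 - t / 4) * (1 - t * x * (1 - x))))
      ((1 + t * x * (1 - x)) / (1 - t * x * (1 - x)) ^ 2) x := by
  set b := 1 - t / 4 with hb_def
  set r := √(t / b)
  have hb : 0 < b := by linarith
  have hr : r ^ 2 * b = t := by rw [sq_sqrt (by positivity), div_mul_cancel₀ _ hb.ne']
  have hatan : HasDerivAt (fun x => arctan ((x - 1 / 2) * r))
      (1 / (1 + ((x - 1 / 2) * r) ^ 2) * r) x :=
    ((hasDerivAt_id x).sub_const _ |>.mul_const r).arctan.congr_deriv (by simp)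
  have hquad : HasDerivAt (fun x => b * (1 - t * x * (1 - x))) (b * (t * (2 * x - 1))) x := by
    refine (((hasDerivAt_id x).const_mul t |>.mul ((hasDerivAt_id x).const_sub 1)).const_sub 1
      |>.const_mul b).congr_deriv ?_
    simp only [id]; ring
  have hD := one_sub_mul_mul_one_sub_pos ht0 ht4 x
  refine ((hatan.const_mul _).add
    (((hasDerivAt_id x).sub_const _).div hquad (by positivity))).congr_deriv ?_
  have h1 : 1 + ((x - 1 / 2) * r) ^ 2 = (1 - t * x * (1 - x)) / b := by
    rw [eq_div_iff hb.ne']; linear_combination (x - 1 / 2) ^ 2 * hr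
  rw [h1]
  field_simp
  simp only [id]
  linear_combination 2 * (1 - t * x * (1 - x)) * hr - 8 * (1 + t * x * (1 - x)) * hb_def

theorem arctan_sqrt_div_two_eq_arcsin (ht0 : 0 ≤ t) (ht4 : t < 4) :
    arctan (√(t / (1 - t / 4)) / 2) = arcsin (√t / 2) := by
  have hst : √t / 2 < 1 := by
    rw [div_lt_one two_pos, sqrt_lt' two_pos]; linarith
  rw [arcsin_eq_arctan ⟨by linarith [sqrt_nonneg t], hst⟩, div_pow, sq_sqrt ht0,
    sqrt_div' _ (by linarith : 0 ≤ 1 - t / 4), div_right_comm]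
  norm_num

theorem integral_one_add_div_one_sub_sq (ht0 : 0 ≤ t) (ht4 : t < 4) :
    ∫ x in (0 : ℝ)..1, (1 + t * x * (1 - x)) / (1 - t * x * (1 - x)) ^ 2
      = 1 / (1 - t / 4) * (1 + 1 / 2 * √(t / (1 - t / 4)) * arcsin (√t / 2)) := by
  have hcont : Continuous fun x => (1 + t * x * (1 - x)) / (1 - t * x * (1 - x)) ^ 2 :=
    Continuous.div (by fun_prop) (by fun_prop)
      fun x => (pow_pos (one_sub_mul_mul_one_sub_pos ht0 ht4 x) 2).ne'
  rw [integral_eq_sub_of_hasDerivAt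
    (fun x _ => hasDerivAt_primitive_one_add_div_one_sub_sq ht0 ht4 x)
    (hcont.intervalIntegrable 0 1)]
  norm_num
  rw [← arctan_sqrt_div_two_eq_arcsin ht0 ht4, one_div_mul_eq_div]
  have hb : 1 - t / 4 ≠ 0 := by linarith
  field_simp
  ring

end ClosedForm

theorem stmt18 (t : ℝ) (ht0 : 0 ≤ t) (ht4 : t < 4) :
    HasSum (fun p : ℕ => (p.factorial : ℝ) ^ 2 / ((2 * p).factorial : ℝ) * t ^ p)
      (1 / (1 - t / 4) *
        (1 + 1 / 2 * Real.sqrt (t / (1 - t / 4)) * Real.arcsin (Real.sqrt t / 2))) := by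
  rw [← integral_one_add_div_one_sub_sq ht0 ht4]
  exact hasSum_factorial_sq_div_factorial_mul_pow ht0 ht4
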